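/- Twiddle commutation identity: for positive integers m_k, m_{k+1}, M (with M_k := m_k·m_{k+1}·M and M_{k+1} := m_{k+1}·M), one has (I_{m_k} ⊗ L^{M_{k+1}}_{m_{k+1}}) W^{M_k}_{M_{k+1}} = V_{m_k, m_{k+1}, M} (I_{m_k} ⊗ L^{M_{k+1}}_{m_{k+1}}). -/

import Mathlib

/-!
Both sides are a permutation matrix times a diagonal one, so it suffices to match the diagonals
along the permutation. Writing a column index as `c = i·(m n) + j·n + ℓ` (`j < m`, `ℓ < n`), the
matrix `I ⊗ L` sends it to the row `r = i·(m n) + ℓ·m + j`, and `V` read at `r` has exponent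
`i·(j n + ℓ)`, which is what `W` reads at `c`.
-/

open Matrix Complex

/-- The primitive `n`-th root of unity `ω_n = exp(-2πi/n)`. -/
noncomputable def tw (n : ℕ) : ℂ := Complex.exp (-(2 * Real.pi * Complex.I) / n)

/-- The `n × n` DFT matrix `F_n = [ω_n^{kl}]`. -/
noncomputable def DFT (n : ℕ) : Matrix (Fin n) (Fin n) ℂ :=
  fun r c => tw n ^ (r.val * c.val)

/-- The stride permutation `L^n_k` (with `n = k*m`), sending the basis vector
`e_{i,k} ⊗ e_{j,m}` (flat index `i*m+j`) to `e_{j,m} ⊗ e_{i,k}` (flat index `j*k+i`). -/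
noncomputable def Lmat (n k m : ℕ) : Matrix (Fin n) (Fin n) ℂ :=
  fun r c => if r.val = (c.val % m) * k + c.val / m then 1 else 0

/-- The diagonal twiddle matrix `W^n_m` (with `n = k*m`), acting on
`e_{i,k} ⊗ e_{j,m}` (flat index `c = i*m+j`) by the scalar `ω_n^{ij}`. -/
noncomputable def Wmat (n m : ℕ) : Matrix (Fin n) (Fin n) ℂ :=
  fun r c => if r = c then tw n ^ ((c.val / m) * (c.val % m)) else 0

/-- Entry of a `k × k` matrix at natural-number indices (0 outside range). -/
noncomputable def ment {k : ℕ} (A : Matrix (Fin k) (Fin k) ℂ) (i j : ℕ) : ℂ :=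
  if h : i < k ∧ j < k then A ⟨i, h.1⟩ ⟨j, h.2⟩ else 0

/-- Kronecker product `A ⊗ B` of a `k×k` and an `m×m` matrix, written on flat
indices of size `n = k*m` (row-major: index `i*m+j ↔ e_{i,k} ⊗ e_{j,m}`). -/
noncomputable def kron (n k m : ℕ) (A : Matrix (Fin k) (Fin k) ℂ)
    (B : Matrix (Fin m) (Fin m) ℂ) : Matrix (Fin n) (Fin n) ℂ :=
  fun r c => ment A (r.val / m) (c.val / m) * ment B (r.val % m) (c.val % m)

/-- Value of a digit list `[d_0, d_1, …]` in the mixed-radix system with radices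
`[c_0, c_1, …]` (least-significant first): `d_0 + c_0*(d_1 + c_1*(…))`. -/
def mval : List ℕ → List ℕ → ℕ
  | c :: cs, d :: ds => d + c * mval cs ds
  | _, _ => 0

/-- Digits (least-significant first) of `x` in the mixed-radix system with
radices `[c_0, c_1, …]` (least-significant first). -/
def mdig : List ℕ → ℕ → List ℕ
  | [], _ => []
  | c :: cs, x => x % c :: mdig cs (x / c)

/-- The digit-reversal permutation `P_α` of a multi-index `α = (n_K, …, n_0)`,
where `a = [n_0, …, n_K]` lists the radices of the system generated by `α`
least-significant first: `x` is decomposed in the system generated by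
`α* = (n_0, …, n_K)` and re-read with reversed digits in the system of `α`. -/
def mrev (a : List ℕ) (x : ℕ) : ℕ := mval a ((mdig a.reverse x).reverse)

/-- The digit-reversal permutation matrix `S_α`, `S_α e_x = e_{P_α x}`;
`a = [n_0, …, n_K]` lists `α = (n_K, …, n_0)` least-significant first. -/
noncomputable def Smat (n : ℕ) (a : List ℕ) : Matrix (Fin n) (Fin n) ℂ :=
  fun r c => if r.val = mrev a c.val then 1 else 0

/-- The diagonal matrix `V_{k,m,n}` of size `N = k*m*n` with
`V_{k,m,n} (e_{i,k} ⊗ e_{j,m} ⊗ e_{ℓ,n}) = ω_{kmn}^{i(ℓm+j)}`, where — as in the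
factorization, where `V` acts after the stride permutation has moved the
`m`-block to the least significant position — the flat index is laid out with
blocks of sizes `k`, `n`, `m` (so `i = c/(n*m)`, `ℓ = (c/m) % n`, `j = c % m`). -/
noncomputable def Vmat (N k m n : ℕ) : Matrix (Fin N) (Fin N) ℂ :=
  fun r c => if r = c then
    tw (k * m * n) ^ ((c.val / (m * n)) * ((c.val % m) * n + (c.val / m) % n)) else 0

theorem Matrix.mul_diagonal_eq_diagonal_mul_of_ne_zero {ι α : Type*} [Fintype ι] [DecidableEq ι]
    [NonUnitalNonAssocCommSemiring α] {P : Matrix ι ι α} {d d' : ι → α}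
    (h : ∀ r c, P r c ≠ 0 → d' r = d c) : P * diagonal d = diagonal d' * P := by
  ext r c
  rw [mul_diagonal, diagonal_mul]
  by_cases hP : P r c = 0
  · simp [hP]
  · rw [h r c hP, mul_comm]

theorem Wmat_eq_diagonal (n m : ℕ) :
    Wmat n m = diagonal fun c : Fin n => tw n ^ (c.val / m * (c.val % m)) := by
  ext r c
  by_cases h : r = c <;> simp [Wmat, h]

theorem Vmat_eq_diagonal (N k m n : ℕ) :
    Vmat N k m n = diagonal fun c : Fin N =>
      tw (k * m * n) ^ (c.val / (m * n) * (c.val % m * n + c.val / m % n)) := by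
  ext r c
  by_cases h : r = c <;> simp [Vmat, h]

theorem eq_of_ment_one_ne_zero {k i j : ℕ} (h : ment (1 : Matrix (Fin k) (Fin k) ℂ) i j ≠ 0) :
    i = j := by
  by_contra hij
  simp [ment, one_apply, hij] at h

theorem eq_of_ment_Lmat_ne_zero {N m n a b : ℕ} (h : ment (Lmat N m n) a b ≠ 0) :
    a = b % n * m + b / n := by
  by_contra hab
  simp [ment, Lmat, hab] at h

theorem index_eq_of_kron_one_Lmat_ne_zero {N k m n : ℕ} {r c : Fin N}
    (h : kron N k (m * n) 1 (Lmat (m * n) m n) r c ≠ 0) :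
    r.val / (m * n) = c.val / (m * n) ∧
      r.val % (m * n) = c.val % n * m + c.val % (m * n) / n := by
  obtain ⟨h1, h2⟩ := mul_ne_zero_iff.mp h
  refine ⟨eq_of_ment_one_ne_zero h1, ?_⟩
  rw [eq_of_ment_Lmat_ne_zero h2, Nat.mod_mul_left_mod]

theorem twiddle_exponent_eq {m n r c : ℕ} (hm : 0 < m) (hn : 0 < n)
    (hdiv : r / (m * n) = c / (m * n))
    (hmod : r % (m * n) = c % n * m + c % (m * n) / n) :
    r / (m * n) * (r % m * n + r / m % n) = c / (m * n) * (c % (m * n)) := by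
  set q := c % (m * n) / n
  have hq : q < m := Nat.div_lt_of_lt_mul (by rw [mul_comm]; exact Nat.mod_lt _ (by positivity))
  have hlow : r % m = q := by
    rw [← Nat.mod_mul_right_mod r m n, hmod, Nat.mul_comm, Nat.mul_add_mod, Nat.mod_eq_of_lt hq]
  have hmid : r / m % n = c % n := by
    rw [← Nat.mod_mul_right_div_self, hmod, add_comm, Nat.add_mul_div_right _ _ hm,
      Nat.div_eq_of_lt hq, zero_add]
  rw [hdiv, hlow, hmid, ← Nat.mod_mul_left_mod c m n, Nat.div_add_mod']

theorem twiddle_commutation_general (mk mk1 M Mk Mk1 : ℕ)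
    (hmk1 : 0 < mk1) (hM : 0 < M)
    (hMk : Mk = mk * mk1 * M) (hMk1 : Mk1 = mk1 * M) :
    kron Mk mk Mk1 1 (Lmat Mk1 mk1 M) * Wmat Mk Mk1 =
      Vmat Mk mk mk1 M * kron Mk mk Mk1 1 (Lmat Mk1 mk1 M) := by
  subst hMk1
  rw [Wmat_eq_diagonal, Vmat_eq_diagonal, ← hMk]
  refine mul_diagonal_eq_diagonal_mul_of_ne_zero fun r c h => ?_
  obtain ⟨hdiv, hmod⟩ := index_eq_of_kron_one_Lmat_ne_zero h
  rw [twiddle_exponent_eq hmk1 hM hdiv hmod]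

/-- twiddle commutation identity. For positive `m_k, m_{k+1}, M`
with `M_k = m_k·m_{k+1}·M` and `M_{k+1} = m_{k+1}·M`:
`(I_{m_k} ⊗ L^{M_{k+1}}_{m_{k+1}}) W^{M_k}_{M_{k+1}}
  = V_{m_k, m_{k+1}, M} (I_{m_k} ⊗ L^{M_{k+1}}_{m_{k+1}})`. -/
theorem twiddle_commutation (mk mk1 M Mk Mk1 : ℕ)
    (hmk : 0 < mk) (hmk1 : 0 < mk1) (hM : 0 < M)
    (hMk : Mk = mk * mk1 * M) (hMk1 : Mk1 = mk1 * M) :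
    kron Mk mk Mk1 1 (Lmat Mk1 mk1 M) * Wmat Mk Mk1 =
      Vmat Mk mk mk1 M * kron Mk mk Mk1 1 (Lmat Mk1 mk1 M) :=
  twiddle_commutation_general mk mk1 M Mk Mk1 hmk1 hM hMk hMk1
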